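/- Let (K, δ) be a differential field of characteristic zero with an element x ∈ K satisfying δ(x) = 1, let f ∈ K and n a positive integer. Then f = δ^n(g) for some g ∈ K if and only if for every i with 0 ≤ i ≤ n−1 there exists h_i ∈ K such that x^i·f = δ(h_i). -/
import Mathlib

set_option linter.unusedSectionVars false

section Aux

variable {K : Type*} [Field K] [CharZero K] {δ : K → K}
  (hadd : ∀ a b : K, δ (a + b) = δ a + δ b)
  (hmul : ∀ a b : K, δ (a * b) = a * δ b + b * δ a)

include hadd hmul

private lemma d0 : δ 0 = 0 := by
  have h := hadd 0 0
  rw [add_zero] at h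
  linear_combination -h

private lemma d1 : δ 1 = 0 := by
  have h := hmul 1 1
  simp at h
  exact h

private lemma dnat : ∀ m : ℕ, δ (m : K) = 0 := by
  intro m
  induction m with
  | zero => simpa using d0 hadd hmul
  | succ k ih =>
    push_cast
    rw [hadd, ih, d1 hadd hmul, add_zero]

private lemma dneg (a : K) : δ (-a) = -δ a := by
  have h := hadd a (-a)
  rw [add_neg_cancel, d0 hadd hmul] at h
  linear_combination -h

private lemma dsub (a b : K) : δ (a - b) = δ a - δ b := by
  rw [sub_eq_add_neg, hadd, dneg hadd hmul, sub_eq_add_neg]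

private lemma dcmul {c : K} (hc : δ c = 0) (a : K) : δ (c * a) = c * δ a := by
  rw [hmul, hc, mul_zero, add_zero]

private lemma dinv {c : K} (hc : δ c = 0) (hc0 : c ≠ 0) : δ c⁻¹ = 0 := by
  have h := hmul c c⁻¹
  rw [mul_inv_cancel₀ hc0, d1 hadd hmul, hc, mul_zero, add_zero] at h
  have := mul_eq_zero.mp h.symm
  tauto

variable {x : K} (hx : δ x = 1)
include hx

private lemma dpow : ∀ i : ℕ, δ (x ^ (i + 1)) = (i + 1 : K) * x ^ i := by
  intro i
  induction i with
  | zero => simpa using hx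
  | succ k ih =>
    rw [pow_succ, hmul, ih, hx]
    push_cast
    ring

private lemma fwd : ∀ i m : ℕ, i ≤ m → ∀ g : K, ∃ h : K, x ^ i * δ^[m + 1] g = δ h := by
  intro i
  induction i with
  | zero =>
    intro m _ g
    exact ⟨δ^[m] g, by simp [Function.iterate_succ_apply']⟩
  | succ i ih =>
    intro m him g
    obtain ⟨m', rfl⟩ : ∃ m', m = m' + 1 := ⟨m - 1, by omega⟩
    obtain ⟨h', hh'⟩ := ih m' (by omega) g
    refine ⟨x ^ (i + 1) * δ^[m' + 1] g - (i + 1 : K) * h', ?_⟩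
    have e1 : δ (x ^ (i + 1) * δ^[m' + 1] g)
        = x ^ (i + 1) * δ^[m' + 1 + 1] g + (i + 1 : K) * x ^ i * δ^[m' + 1] g := by
      rw [hmul, dpow hadd hmul hx, Function.iterate_succ_apply' δ (m' + 1) g]
      ring
    have hc : δ ((i : K) + 1) = 0 := by
      have := dnat hadd hmul (i + 1); push_cast at this; exact this
    rw [dsub hadd hmul, dcmul hadd hmul hc, e1, ← hh']
    ring

private lemma bwd : ∀ n : ℕ, ∀ f : K,
    (∀ i : ℕ, i < n + 1 → ∃ h : K, x ^ i * f = δ h) → ∃ g : K, δ^[n + 1] g = f := by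
  intro n
  induction n with
  | zero =>
    intro f H
    obtain ⟨h, hh⟩ := H 0 (by omega)
    exact ⟨h, by simpa using hh.symm⟩
  | succ n ih =>
    intro f H
    obtain ⟨h0, hh0⟩ := H 0 (by omega)
    rw [pow_zero, one_mul] at hh0
    have H' : ∀ i : ℕ, i < n + 1 → ∃ h : K, x ^ i * h0 = δ h := by
      intro i hi
      obtain ⟨hi1, hhi1⟩ := H (i + 1) (by omega)
      have hne : ((i : K) + 1) ≠ 0 := by
        exact_mod_cast Nat.cast_add_one_ne_zero (R := K) i
      refine ⟨((i : K) + 1)⁻¹ * (x ^ (i + 1) * h0 - hi1), ?_⟩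
      have hc : δ ((i : K) + 1) = 0 := by
        have := dnat hadd hmul (i + 1); push_cast at this; exact this
      rw [dcmul hadd hmul (dinv hadd hmul hc hne), dsub hadd hmul, hmul,
        dpow hadd hmul hx, ← hh0, ← hhi1]
      field_simp
      ring
    obtain ⟨g, hg⟩ := ih h0 H'
    refine ⟨g, ?_⟩
    rw [Function.iterate_succ_apply' δ (n + 1) g, hg, hh0]

end Aux

/-- Let `(K, δ)` be a differential field of characteristic zero with `δ x = 1`,
`f ∈ K` and `n` a positive integer. Then `f = δ^n g` for some `g ∈ K` iff for every
`i` with `0 ≤ i ≤ n − 1` there exists `h ∈ K` with `x^i * f = δ h`. -/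
theorem stmt10 {K : Type*} [Field K] [CharZero K] (δ : K → K)
    (hadd : ∀ a b : K, δ (a + b) = δ a + δ b)
    (hmul : ∀ a b : K, δ (a * b) = a * δ b + b * δ a)
    (x : K) (hx : δ x = 1) (f : K) (n : ℕ) (hn : 0 < n) :
    (∃ g : K, δ^[n] g = f) ↔ (∀ i : ℕ, i < n → ∃ h : K, x ^ i * f = δ h) := by
  obtain ⟨m, rfl⟩ : ∃ m, n = m + 1 := ⟨n - 1, by omega⟩
  constructor
  · rintro ⟨g, rfl⟩ i hi
    exact fwd hadd hmul hx i m (by omega) g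
  · intro H
    exact bwd hadd hmul hx m f H
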